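/- Let L = sl₂(F) over a field F of characteristic zero with standard basis x, h, y satisfying [h,x] = 2x, [h,y] = −2y, [x,y] = h, and let α ∈ F. Then the linear operator Q : L → L defined on the basis by Q(x) = 4x, Q(h) = −8αx + 2h, Q(y) = 4αh is a Rota–Baxter operator of weight −4, and Q + R = 4·id, where R is the linear operator defined by R(x) = 0, R(h) = 2h + 8αx, R(y) = 4y − 4αh and id is the identity operator on L. -/

import Mathlib

/-!
Both sides of the Rota–Baxter identity are bilinear in the two arguments, so it suffices to verify
it on the nine pairs of basis vectors, where it is a direct computation with the brackets of
`x, h, y`.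
-/

namespace LieAlgebra

variable {F L : Type*} [CommRing F] [LieRing L] [LieAlgebra F L]

def IsRotaBaxter (w : F) (Q : L →ₗ[F] L) : Prop :=
  ∀ u v : L, ⁅Q u, Q v⁆ = Q (⁅Q u, v⁆ + ⁅u, Q v⁆ + w • ⁅u, v⁆)

def rotaBaxterDefect (w : F) (Q : L →ₗ[F] L) : L →ₗ[F] L →ₗ[F] L :=
  LinearMap.mk₂ F (fun u v => ⁅Q u, Q v⁆ - Q (⁅Q u, v⁆ + ⁅u, Q v⁆ + w • ⁅u, v⁆))
    (fun u₁ u₂ v => by simp only [map_add, add_lie, smul_add]; abel)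
    (fun c u v => by simp only [map_smul, smul_lie, smul_comm w c, ← smul_add, smul_sub])
    (fun u v₁ v₂ => by simp only [map_add, lie_add, smul_add]; abel)
    (fun c u v => by simp only [map_smul, lie_smul, smul_comm w c, ← smul_add, smul_sub])

theorem isRotaBaxter_iff_rotaBaxterDefect_eq_zero (w : F) (Q : L →ₗ[F] L) :
    IsRotaBaxter w Q ↔ rotaBaxterDefect w Q = 0 := by
  simp only [IsRotaBaxter, LinearMap.ext_iff₂, rotaBaxterDefect, LinearMap.mk₂_apply,
    LinearMap.zero_apply, sub_eq_zero]

theorem isRotaBaxter_of_basis {ι : Type*} (b : Module.Basis ι F L) (w : F) (Q : L →ₗ[F] L)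
    (hb : ∀ i j, ⁅Q (b i), Q (b j)⁆ = Q (⁅Q (b i), b j⁆ + ⁅b i, Q (b j)⁆ + w • ⁅b i, b j⁆)) :
    IsRotaBaxter w Q := by
  rw [isRotaBaxter_iff_rotaBaxterDefect_eq_zero]
  refine LinearMap.ext_basis b b fun i j => ?_
  simp [rotaBaxterDefect, hb]

end LieAlgebra

open LieAlgebra

theorem stmt14 {F L : Type*} [Field F] [LieRing L] [LieAlgebra F L]
    -- `L = sl₂(F)` with standard basis `x, h, y`
    (bb : Module.Basis (Fin 3) F L) (x h y : L)
    (hb0 : bb 0 = x) (hb1 : bb 1 = h) (hb2 : bb 2 = y)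
    (hhx : ⁅h, x⁆ = (2 : F) • x) (hhy : ⁅h, y⁆ = (-2 : F) • y) (hxy : ⁅x, y⁆ = h)
    (α : F)
    -- the operator `Q`
    (Q : L →ₗ[F] L)
    (hQx : Q x = (4 : F) • x) (hQh : Q h = (-8 * α) • x + (2 : F) • h)
    (hQy : Q y = (4 * α) • h)
    -- the operator `R`
    (R : L →ₗ[F] L)
    (hRx : R x = 0) (hRh : R h = (2 : F) • h + (8 * α) • x)
    (hRy : R y = (4 : F) • y - (4 * α) • h) :
    -- `Q` is a Rota–Baxter operator of weight `-4`, and `Q + R = 4·id`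
    (∀ u v : L, ⁅Q u, Q v⁆ = Q (⁅Q u, v⁆ + ⁅u, Q v⁆ + (-4 : F) • ⁅u, v⁆)) ∧
    Q + R = (4 : F) • (LinearMap.id : L →ₗ[F] L) := by
  have hxh : ⁅x, h⁆ = (-2 : F) • x := by rw [← lie_skew, hhx]; module
  have hyh : ⁅y, h⁆ = (2 : F) • y := by rw [← lie_skew, hhy]; module
  have hyx : ⁅y, x⁆ = -h := by rw [← lie_skew, hxy]
  constructor
  · refine isRotaBaxter_of_basis bb (-4) Q fun i j => ?_
    fin_cases i <;> fin_cases j <;>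
      simp only [Fin.zero_eta, Fin.mk_one, Fin.reduceFinMk, hb0, hb1, hb2, map_add, map_smul,
        hQx, hQh, hQy, lie_add, add_lie, lie_smul, smul_lie, lie_self, hhx, hhy, hxy, hxh, hyh,
        hyx, map_neg, map_zero, smul_add, smul_neg, smul_smul, smul_zero, add_zero, zero_add] <;>
      module
  · refine bb.ext fun i => ?_
    fin_cases i <;>
    · simp only [Fin.zero_eta, Fin.mk_one, Fin.reduceFinMk, hb0, hb1, hb2, LinearMap.add_apply,
        LinearMap.smul_apply, LinearMap.id_apply, hQx, hQh, hQy, hRx, hRh, hRy]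
      module
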